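/- Let λ > 0 be real and let k, m ∈ ℕ. There exist real coefficients α_0, α_1, …, α_m (depending on λ, k, m) such that for all t ∈ ℝ, C^λ_{k+2m}(t) = ∑_{j=0}^{m} α_j · C^{λ+m}_{k+2(m−j)}(t), and the last coefficient is α_m = (−1)^m · (Γ(λ+m)/Γ(λ)) · (Γ(λ+k+m+1)/Γ(λ+k+2m+1)). -/

import Mathlib

/-- The Gegenbauer polynomial `C_k^λ(z)` given by its explicit sum. -/
noncomputable def gegenbauer (k : ℕ) (l : ℝ) (z : ℝ) : ℝ :=
  ∑ j ∈ Finset.range (k / 2 + 1),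
    (-1 : ℝ) ^ j * (Real.Gamma ((k : ℝ) - j + l) /
      (Real.Gamma l * (Nat.factorial j) * (Nat.factorial (k - 2 * j)))) * (2 * z) ^ (k - 2 * j)

/-!
The contiguous relation `(k + 2 + λ) C^λ_{k+2} = λ (C^{λ+1}_{k+2} - C^{λ+1}_k)` holds
coefficient by coefficient, as a consequence of `Γ(x + 1) = x Γ(x)`. Applying it to `C^λ_{k+2m}`
and then, by induction on `m`, to the two resulting polynomials of parameter `λ + 1` expresses
`C^λ_{k+2m}` in the family `C^{λ+m}_{k+2(m-j)}`. Only the second polynomial contributes to the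
coefficient of `C^{λ+m}_k`, whence the recursion `α_m(λ) = -λ / (k + 2m + λ) · α_{m-1}(λ + 1)`.
-/

open Finset Real

noncomputable def gegenbauerCoeff (k : ℕ) (l : ℝ) (j : ℕ) : ℝ :=
  (-1 : ℝ) ^ j * (Gamma ((k : ℝ) - j + l) / (Gamma l * j.factorial * (k - 2 * j).factorial))

lemma gegenbauer_eq_sum (k : ℕ) (l z : ℝ) :
    gegenbauer k l z =
      ∑ j ∈ range (k / 2 + 1), gegenbauerCoeff k l j * (2 * z) ^ (k - 2 * j) :=
  rfl

lemma gegenbauerCoeff_add_two_zero {l : ℝ} (hl : 0 < l) (k : ℕ) :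
    ((k : ℝ) + 2 + l) * gegenbauerCoeff (k + 2) l 0 = l * gegenbauerCoeff (k + 2) (l + 1) 0 := by
  have hΓ : Gamma ((k : ℝ) + 2 + l + 1) = ((k : ℝ) + 2 + l) * Gamma ((k : ℝ) + 2 + l) :=
    Gamma_add_one (by positivity)
  simp only [gegenbauerCoeff, pow_zero, one_mul, Nat.cast_zero, sub_zero, Nat.factorial_zero,
    Nat.cast_one, mul_one, mul_zero, Nat.cast_add, Nat.cast_ofNat, ← add_assoc, hΓ,
    Gamma_add_one hl.ne']
  have := (Gamma_pos_of_pos hl).ne'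
  field_simp

lemma gegenbauerCoeff_add_two_succ {l : ℝ} (hl : 0 < l) {k j : ℕ} (hj : 2 * j ≤ k) :
    ((k : ℝ) + 2 + l) * gegenbauerCoeff (k + 2) l (j + 1) =
      l * (gegenbauerCoeff (k + 2) (l + 1) (j + 1) - gegenbauerCoeff k (l + 1) j) := by
  set x : ℝ := (k : ℝ) - j + l + 1
  have hx_pos : 0 < x := by
    have : (j : ℝ) ≤ k := by exact_mod_cast (by omega : j ≤ k)
    linarith
  have h₁ : ((k + 2 : ℕ) : ℝ) - (j + 1 : ℕ) + l = x := by push_cast; ring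
  have h₂ : ((k + 2 : ℕ) : ℝ) - (j + 1 : ℕ) + (l + 1) = x + 1 := by push_cast; ring
  have h₃ : (k : ℝ) - j + (l + 1) = x := by ring
  have hk : k + 2 - 2 * (j + 1) = k - 2 * j := by omega
  simp only [gegenbauerCoeff, h₁, h₂, h₃, hk, Gamma_add_one hx_pos.ne', Gamma_add_one hl.ne',
    Nat.factorial_succ, Nat.cast_mul, pow_succ]
  have := (Gamma_pos_of_pos hl).ne'
  field_simp
  push_cast
  ring

theorem gegenbauer_add_two {l : ℝ} (hl : 0 < l) (k : ℕ) (z : ℝ) :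
    ((k : ℝ) + 2 + l) * gegenbauer (k + 2) l z =
      l * (gegenbauer (k + 2) (l + 1) z - gegenbauer k (l + 1) z) := by
  have hrange : (k + 2) / 2 + 1 = k / 2 + 1 + 1 := by omega
  have hterm : ∀ j ∈ range (k / 2 + 1),
      ((k : ℝ) + 2 + l) * (gegenbauerCoeff (k + 2) l (j + 1) * (2 * z) ^ (k + 2 - 2 * (j + 1))) =
        l * (gegenbauerCoeff (k + 2) (l + 1) (j + 1) * (2 * z) ^ (k + 2 - 2 * (j + 1)) -
          gegenbauerCoeff k (l + 1) j * (2 * z) ^ (k - 2 * j)) := by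
    intro j hj
    have hj : 2 * j ≤ k := by have := mem_range.mp hj; omega
    rw [show k + 2 - 2 * (j + 1) = k - 2 * j by omega, ← mul_assoc,
      gegenbauerCoeff_add_two_succ hl hj]
    ring
  rw [gegenbauer_eq_sum, gegenbauer_eq_sum, gegenbauer_eq_sum, hrange,
    sum_range_succ' _ (k / 2 + 1), sum_range_succ' _ (k / 2 + 1), mul_add, mul_sum,
    sum_congr rfl hterm, ← mul_sum, sum_sub_distrib, ← mul_assoc,
    gegenbauerCoeff_add_two_zero hl]
  ring

lemma sum_range_sub_sum_range_shift {R : Type*} [Ring R] (β γ f : ℕ → R) (n : ℕ) :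
    ∑ j ∈ range (n + 1), β j * f j - ∑ j ∈ range (n + 1), γ j * f (j + 1) =
      ∑ j ∈ range (n + 2),
        ((if j < n + 1 then β j else 0) - (if j = 0 then 0 else γ (j - 1))) * f j := by
  simp only [sub_mul, sum_sub_distrib]
  congr 1
  · rw [sum_range_succ _ (n + 1), if_neg (lt_irrefl _), zero_mul, add_zero]
    exact sum_congr rfl fun j hj => by rw [if_pos (mem_range.mp hj)]
  · rw [sum_range_succ' _ (n + 1), if_pos rfl, zero_mul, add_zero]
    exact sum_congr rfl fun j _ => by rw [if_neg j.succ_ne_zero, Nat.add_sub_cancel]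

noncomputable def gegenbauerExpansionLastCoeff (l : ℝ) (k m : ℕ) : ℝ :=
  (-1 : ℝ) ^ m * (Gamma (l + m) / Gamma l) * (Gamma (l + k + m + 1) / Gamma (l + k + 2 * m + 1))

lemma gegenbauerExpansionLastCoeff_zero {l : ℝ} (hl : 0 < l) (k : ℕ) :
    gegenbauerExpansionLastCoeff l k 0 = 1 := by
  have h₁ := (Gamma_pos_of_pos hl).ne'
  have h₂ := (Gamma_pos_of_pos (by positivity : 0 < l + k + 1)).ne'
  simp [gegenbauerExpansionLastCoeff, h₁, h₂]

lemma gegenbauerExpansionLastCoeff_succ {l : ℝ} (hl : 0 < l) (k m : ℕ) :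
    gegenbauerExpansionLastCoeff l k (m + 1) =
      -(l / ((k + 2 * m : ℕ) + 2 + l)) * gegenbauerExpansionLastCoeff (l + 1) k m := by
  have hΓ : Gamma (l + k + 2 * m + 3) = (l + k + 2 * m + 2) * Gamma (l + k + 2 * m + 2) := by
    rw [← Gamma_add_one (by positivity)]; ring_nf
  simp only [gegenbauerExpansionLastCoeff, Nat.cast_add, Nat.cast_mul, Nat.cast_one,
    Nat.cast_ofNat, pow_succ]
  rw [show l + (m + 1 : ℝ) = l + 1 + m by ring,
    show l + k + (m + 1 : ℝ) + 1 = l + 1 + k + m + 1 by ring,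
    show l + k + 2 * (m + 1 : ℝ) + 1 = l + k + 2 * m + 3 by ring,
    show l + 1 + k + 2 * (m : ℝ) + 1 = l + k + 2 * m + 2 by ring, hΓ, Gamma_add_one hl.ne']
  have := (Gamma_pos_of_pos hl).ne'
  have := (Gamma_pos_of_pos (by positivity : 0 < l + k + 2 * m + 2)).ne'
  field_simp
  ring

theorem exists_gegenbauer_expansion {l : ℝ} (hl : 0 < l) (k m : ℕ) :
    ∃ α : ℕ → ℝ,
      (∀ t : ℝ, gegenbauer (k + 2 * m) l t =
        ∑ j ∈ range (m + 1), α j * gegenbauer (k + 2 * (m - j)) (l + m) t) ∧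
      α m = gegenbauerExpansionLastCoeff l k m := by
  induction m generalizing k l with
  | zero =>
    exact ⟨fun _ => 1, fun t => by simp, (gegenbauerExpansionLastCoeff_zero hl k).symm⟩
  | succ m ih =>
    obtain ⟨β, hβ, -⟩ := ih (by linarith : 0 < l + 1) (k + 2)
    obtain ⟨γ, hγ, hγ_last⟩ := ih (by linarith : 0 < l + 1) k
    set c : ℝ := l / ((k + 2 * m : ℕ) + 2 + l)
    refine ⟨fun j => c * ((if j < m + 1 then β j else 0) - (if j = 0 then 0 else γ (j - 1))),
      fun t => ?_, ?_⟩
    · have hc : ((k + 2 * m : ℕ) : ℝ) + 2 + l ≠ 0 := by positivity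
      have hrec : gegenbauer (k + 2 * m + 2) l t =
          c * (gegenbauer (k + 2 * m + 2) (l + 1) t - gegenbauer (k + 2 * m) (l + 1) t) := by
        rw [div_mul_eq_mul_div, eq_div_iff hc, mul_comm]
        exact gegenbauer_add_two hl (k + 2 * m) t
      set f : ℕ → ℝ := fun j => gegenbauer (k + 2 * (m + 1 - j)) (l + 1 + m) t
      have hβf : ∀ j ∈ range (m + 1),
          β j * gegenbauer (k + 2 + 2 * (m - j)) (l + 1 + m) t = β j * f j := fun j hj => by
        have := mem_range.mp hj
        rw [show k + 2 + 2 * (m - j) = k + 2 * (m + 1 - j) by omega]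
      have hγf : ∀ j ∈ range (m + 1),
          γ j * gegenbauer (k + 2 * (m - j)) (l + 1 + m) t = γ j * f (j + 1) := fun j _ => by
        simp only [f, Nat.add_sub_add_right]
      rw [show k + 2 * (m + 1) = k + 2 * m + 2 by omega, hrec, hγ,
        show k + 2 * m + 2 = k + 2 + 2 * m by omega, hβ, sum_congr rfl hβf, sum_congr rfl hγf,
        sum_range_sub_sum_range_shift, mul_sum,
        show l + ((m + 1 : ℕ) : ℝ) = l + 1 + m by push_cast; ring]
      exact sum_congr rfl fun j _ => (mul_assoc _ _ _).symm
    · simp only [Nat.add_sub_cancel, if_neg (lt_irrefl (m + 1)), if_neg m.succ_ne_zero, zero_sub,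
        hγ_last, gegenbauerExpansionLastCoeff_succ hl, c]
      ring

/-- `C^λ_{k+2m}` expands in the `C^{λ+m}` family with explicit last
coefficient `α_m = (-1)^m (Γ(λ+m)/Γ(λ)) (Γ(λ+k+m+1)/Γ(λ+k+2m+1))`. -/
theorem stmt4 (l : ℝ) (hl : 0 < l) (k m : ℕ) :
    ∃ α : ℕ → ℝ,
      (∀ t : ℝ, gegenbauer (k + 2 * m) l t =
        ∑ j ∈ Finset.range (m + 1), α j * gegenbauer (k + 2 * (m - j)) (l + m) t) ∧
      α m = (-1 : ℝ) ^ m * (Real.Gamma (l + m) / Real.Gamma l) *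
        (Real.Gamma (l + k + m + 1) / Real.Gamma (l + k + 2 * m + 1)) :=
  exists_gegenbauer_expansion hl k m
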